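/- arXiv:1308.6045 — 3 statements merged into one kernel-verified Lean document; each statement's English description precedes it below -/
import Mathlib

section
/- Let (Z,p) ⊂ (M,p) be a reduced complete intersection defined by a regular sequence g_1,…,g_k in the local ring O of M at p, and let f ∈ O be such that the multiplicity of f along Z at the generic point of every component of Z is at least p. Then f ∈ I^p where I = (g_1,…,g_k); explicitly, f can be written as a sum over multi-indices (m_1,…,m_k) with m_1+⋯+m_k = p of terms g_1^{m_1}⋯g_k^{m_k}·a_{m_1,…,m_k} with a_{m_1,…,m_k} ∈ O. -/
/-!
Regular sequences are quasi-regular: a form of degree `n` in `g` whose value lies in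
`I ^ (n + 1)` has all its coefficients in `I` (Matsumura, Thm. 16.2; induction on the length of
the sequence, splitting off the last variable). Consequently an element that is a nonzerodivisor
modulo `I` remains one modulo every power `I ^ n`.

The multiplicity hypothesis says that the colon ideal `I ^ p : f` lies in no minimal prime of `I`,
so by prime avoidance it contains an `s` outside all of them. Since `I` is radical, such an `s` is
a nonzerodivisor modulo `I`, hence modulo `I ^ p`, and `s * f ∈ I ^ p` gives `f ∈ I ^ p`.
-/

open MvPolynomial RingTheory.Sequence

section

variable {R σ τ : Type*} [CommRing R]

namespace MvPolynomial

lemma IsHomogeneous.of_X_mul {i : σ} {H : MvPolynomial σ R} {n : ℕ}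
    (h : (X i * H).IsHomogeneous (n + 1)) : H.IsHomogeneous n := by
  intro d hd
  have := h (d := Finsupp.single i 1 + d) (by rwa [coeff_X_mul])
  simp_all [Finsupp.weight_apply, Finsupp.sum_add_index']
  omega

lemma rename_mem_map_C {I : Ideal R} (f : σ → τ) {F : MvPolynomial σ R}
    (hF : F ∈ I.map (C : R →+* MvPolynomial σ R)) :
    rename f F ∈ I.map (C : R →+* MvPolynomial τ R) := by
  have := Ideal.mem_map_of_mem (rename (R := R) f).toRingHom hF
  rwa [Ideal.map_map, show (rename f).toRingHom.comp C = C from RingHom.ext (rename_C f)] at this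

lemma exists_eq_rename_castSucc_add_X_last_mul {k n : ℕ} {F : MvPolynomial (Fin (k + 1)) R}
    (hF : F.IsHomogeneous (n + 1)) :
    ∃ G : MvPolynomial (Fin k) R, G.IsHomogeneous (n + 1) ∧
      ∃ H : MvPolynomial (Fin (k + 1)) R, H.IsHomogeneous n ∧
        F = rename Fin.castSucc G + X (Fin.last k) * H := by
  let φ : Fin (k + 1) → MvPolynomial (Fin k) R := Fin.lastCases 0 X
  have hφ : ∀ i, (φ i).IsHomogeneous 1 :=
    Fin.lastCases (by simpa [φ] using isHomogeneous_zero _ _ _)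
      (fun j => by simpa [φ] using isHomogeneous_X R j)
  set G := aeval φ F
  have hG : G.IsHomogeneous (n + 1) := by simpa only [one_mul] using hF.aeval φ hφ
  have hFG : F - rename Fin.castSucc G ∈ Ideal.span {X (Fin.last k)} := by
    let q := Ideal.Quotient.mkₐ R (Ideal.span {(X (Fin.last k) : MvPolynomial (Fin (k + 1)) R)})
    have : q.comp ((rename Fin.castSucc).comp (aeval φ)) = q := by
      refine algHom_ext fun i => Fin.lastCases ?_ (fun j => ?_) i <;> simp [φ, q]
    exact Ideal.Quotient.eq.mp (DFunLike.congr_fun this F).symm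
  obtain ⟨H, hH⟩ := Ideal.mem_span_singleton'.mp hFG
  refine ⟨G, hG, H, IsHomogeneous.of_X_mul (i := Fin.last k) ?_, by linear_combination -hH⟩
  rw [mul_comm, hH]
  exact hF.sub hG.rename_isHomogeneous

lemma mem_map_C_of_isHomogeneous_zero {g : σ → R} {I : Ideal R}
    {F : MvPolynomial σ R} (hF : F.IsHomogeneous 0) (h : eval g F ∈ I) :
    F ∈ I.map (C : R →+* MvPolynomial σ R) := by
  rw [totalDegree_eq_zero_iff_eq_C.mp ((totalDegree_zero_iff_isHomogeneous _).mpr hF)] at h ⊢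
  exact Ideal.mem_map_of_mem _ (by simpa using h)

end MvPolynomial

theorem Ideal.mem_mul_span_range_pow_iff (g : σ → R) (J : Ideal R) (n : ℕ) (x : R) :
    x ∈ J * Ideal.span (Set.range g) ^ n ↔
      ∃ F ∈ J.map (C : R →+* MvPolynomial σ R), F.IsHomogeneous n ∧ eval g F = x := by
  constructor
  · induction n generalizing x with
    | zero =>
      intro hx
      rw [pow_zero, Ideal.one_eq_top, Ideal.mul_top] at hx
      exact ⟨C x, Ideal.mem_map_of_mem _ hx, isHomogeneous_C _ _, eval_C _⟩
    | succ n ih =>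
      intro hx
      rw [pow_succ, ← mul_assoc] at hx
      refine Submodule.mul_induction_on hx (fun y hy z hz => ?_) fun y z hy hz => ?_
      · obtain ⟨F, hFJ, hF, rfl⟩ := ih y hy
        obtain ⟨G, hG, rfl⟩ := (Ideal.mem_span_iff_exists_isHomogeneous g _).mp hz
        exact ⟨F * G, Ideal.mul_mem_right _ _ hFJ, hF.mul hG, map_mul _ _ _⟩
      · obtain ⟨F, hFJ, hF, rfl⟩ := hy
        obtain ⟨G, hGJ, hG, rfl⟩ := hz
        exact ⟨F + G, add_mem hFJ hGJ, hF.add hG, map_add _ _ _⟩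
  · rintro ⟨F, hFJ, hF, rfl⟩
    classical
    rw [← F.support_sum_monomial_coeff, map_sum]
    refine Ideal.sum_mem _ fun d hd => ?_
    rw [← mul_one (coeff d F), ← C_mul_monomial, map_mul, eval_C]
    have hd : d.degree = n := by
      rw [Finsupp.degree_eq_weight_one]; exact hF (mem_support_iff.mp hd)
    exact Ideal.mul_mem_mul (MvPolynomial.mem_map_C_iff.mp hFJ d)
      ((Ideal.mem_span_pow_iff_exists_isHomogeneous g _).mpr
        ⟨_, isHomogeneous_monomial _ hd, rfl⟩)

lemma MvPolynomial.mem_map_C_of_eval_mem_pow_succ {g : σ → R} {n : ℕ}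
    (h0 : ∀ F : MvPolynomial σ R, F.IsHomogeneous n → eval g F = 0 →
      F ∈ (Ideal.span (Set.range g)).map C)
    {F : MvPolynomial σ R} (hF : F.IsHomogeneous n)
    (h : eval g F ∈ Ideal.span (Set.range g) ^ (n + 1)) :
    F ∈ (Ideal.span (Set.range g)).map C := by
  rw [pow_succ', Ideal.mem_mul_span_range_pow_iff] at h
  obtain ⟨G, hGI, hG, hGF⟩ := h
  simpa using add_mem (h0 (F - G) (hF.sub hG) (by rw [map_sub, hGF, sub_self])) hGI

/-- The linear-independence half of "the monomials of degree `n` in `g` form an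
`R ⧸ I`-basis of `I ^ n / I ^ (n + 1)`", where `I = (g)`. -/
def IsQuasiRegular (g : σ → R) : Prop :=
  ∀ (n : ℕ) (F : MvPolynomial σ R), F.IsHomogeneous n →
    eval g F ∈ Ideal.span (Set.range g) ^ (n + 1) → F ∈ (Ideal.span (Set.range g)).map C

lemma IsQuasiRegular.mem_pow_of_mul_mem {g : σ → R} (hg : IsQuasiRegular g) {s : R}
    (hs : ∀ y, s * y ∈ Ideal.span (Set.range g) → y ∈ Ideal.span (Set.range g)) (n : ℕ)
    {y : R} (hy : s * y ∈ Ideal.span (Set.range g) ^ n) : y ∈ Ideal.span (Set.range g) ^ n := by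
  induction n generalizing y with
  | zero => simp
  | succ n ih =>
    obtain ⟨F, hF, rfl⟩ := (Ideal.mem_span_pow_iff_exists_isHomogeneous g y).mp
      (ih (Ideal.pow_le_pow_right n.le_succ hy))
    have hsF : C s * F ∈ (Ideal.span (Set.range g)).map C :=
      hg n _ (hF.C_mul s) (by simpa using hy)
    have hFI : F ∈ (Ideal.span (Set.range g)).map C := MvPolynomial.mem_map_C_iff.mpr fun d =>
      hs _ (by simpa only [coeff_C_mul] using MvPolynomial.mem_map_C_iff.mp hsF d)
    rw [pow_succ']
    exact (Ideal.mem_mul_span_range_pow_iff g _ n _).mpr ⟨F, hFI, hF, rfl⟩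

lemma isWeaklyRegular_ofFn_succ_iff {k : ℕ} (g : Fin (k + 1) → R) :
    IsWeaklyRegular R (List.ofFn g) ↔ IsWeaklyRegular R (List.ofFn (g ∘ Fin.castSucc)) ∧
      ∀ y, g (Fin.last k) * y ∈ Ideal.span (Set.range (g ∘ Fin.castSucc)) →
        y ∈ Ideal.span (Set.range (g ∘ Fin.castSucc)) := by
  rw [List.ofFn_succ', List.concat_eq_append, isWeaklyRegular_append_iff,
    isWeaklyRegular_singleton_iff, isSMulRegular_quotient_iff_mem_of_smul_mem,
    Ideal.smul_eq_mul, Ideal.mul_top]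
  simp [Ideal.ofList, Function.comp_def, Set.range]

lemma IsQuasiRegular.of_castSucc {k : ℕ} {g : Fin (k + 1) → R}
    (hg : IsQuasiRegular (g ∘ Fin.castSucc))
    (hlast : ∀ y, g (Fin.last k) * y ∈ Ideal.span (Set.range (g ∘ Fin.castSucc)) →
      y ∈ Ideal.span (Set.range (g ∘ Fin.castSucc))) :
    IsQuasiRegular g := by
  set I := Ideal.span (Set.range g)
  set I' := Ideal.span (Set.range (g ∘ Fin.castSucc))
  set a := g (Fin.last k)
  have hI' : I' ≤ I := Ideal.span_mono (Set.range_comp_subset_range _ _)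
  have ha : a ∈ I := Ideal.subset_span ⟨_, rfl⟩
  intro n
  induction n with
  | zero => exact fun F hF h => mem_map_C_of_isHomogeneous_zero hF (by simpa using h)
  | succ n ih =>
    refine fun F hF => mem_map_C_of_eval_mem_pow_succ (fun F hF hF0 => ?_) hF
    obtain ⟨G, hG, H, hH, rfl⟩ := exists_eq_rename_castSucc_add_X_last_mul hF
    have hsplit : eval (g ∘ Fin.castSucc) G + a * eval g H = 0 := by
      simpa [eval_rename] using hF0
    have hGI' : eval (g ∘ Fin.castSucc) G ∈ I' ^ (n + 1) :=
      (Ideal.mem_span_pow_iff_exists_isHomogeneous _ _).mpr ⟨G, hG, rfl⟩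
    have hHI' : eval g H ∈ I' ^ (n + 1) := hg.mem_pow_of_mul_mem hlast (n + 1)
      (by rw [eq_neg_of_add_eq_zero_right hsplit]; exact neg_mem hGI')
    obtain ⟨H', hH', hH'H⟩ := (Ideal.mem_span_pow_iff_exists_isHomogeneous _ _).mp hHI'
    have hGaH' : G + C a * H' ∈ I'.map C := hg (n + 1) _ (hG.add (hH'.C_mul a))
      (by simp [hH'H, hsplit])
    have hGI : G ∈ I.map C := by
      simpa using sub_mem (Ideal.map_mono hI' hGaH')
        (Ideal.mul_mem_right H' _ (Ideal.mem_map_of_mem C ha))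
    exact add_mem (rename_mem_map_C _ hGI)
      (Ideal.mul_mem_left _ _ (ih H hH (Ideal.pow_right_mono hI' _ hHI')))

theorem isQuasiRegular_of_isWeaklyRegular {k : ℕ} (g : Fin k → R)
    (hg : IsWeaklyRegular R (List.ofFn g)) : IsQuasiRegular g := by
  induction k with
  | zero =>
    rintro (_ | n) F hF h
    · exact mem_map_C_of_isHomogeneous_zero hF (by simpa using h)
    · obtain rfl : F = 0 := by
        by_contra hF0
        exact n.succ_ne_zero ((isHomogeneous_of_isEmpty (f := F)).inj_right hF hF0).symm
      exact zero_mem _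
  | succ k ih =>
    obtain ⟨hg', hlast⟩ := (isWeaklyRegular_ofFn_succ_iff g).mp hg
    exact (ih _ hg').of_castSucc hlast

lemma Ideal.exists_mem_forall_notMem_of_finite {J : Ideal R} {S : Set (Ideal R)}
    (hS : S.Finite) (hprime : ∀ P ∈ S, P.IsPrime) (hJ : ∀ P ∈ S, ¬J ≤ P) :
    ∃ s ∈ J, ∀ P ∈ S, s ∉ P := by
  by_contra! h
  obtain ⟨P, hP, hJP⟩ := (Ideal.subset_union_prime_finite hS (f := id) ⊥ ⊥
    fun P hP _ _ => hprime P hP).mp fun s hs => by simpa using h s hs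
  exact hJ P hP hJP

lemma Ideal.IsRadical.mem_of_mul_mem {I : Ideal R} (hI : I.IsRadical) {s y : R}
    (hs : ∀ P ∈ I.minimalPrimes, s ∉ P) (hsy : s * y ∈ I) : y ∈ I := by
  rw [← hI.radical, ← Ideal.sInf_minimalPrimes, Ideal.mem_sInf]
  exact fun P hP => (hP.1.1.mem_or_mem (hP.1.2 hsy)).resolve_left (hs P hP)

end

theorem stmt_1_general {O : Type*} [CommRing O] [IsNoetherianRing O]
    {k : ℕ} (g : Fin k → O)
    (hreg : RingTheory.Sequence.IsRegular O (List.ofFn g))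
    (hred : IsReduced (O ⧸ (Ideal.span (Set.range g) : Ideal O)))
    (f : O) (p : ℕ)
    (hmult : ∀ (P : Ideal O) [P.IsPrime],
      P ∈ (Ideal.span (Set.range g) : Ideal O).minimalPrimes →
      (algebraMap O (Localization.AtPrime P)) f ∈
        (Ideal.span (Set.range g)).map (algebraMap O (Localization.AtPrime P)) ^ p) :
    f ∈ (Ideal.span (Set.range g) : Ideal O) ^ p := by
  set I := Ideal.span (Set.range g)
  have hcolon : ∀ P ∈ I.minimalPrimes, ¬(I ^ p).colon (Ideal.span {f}) ≤ P := by
    intro P hP hle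
    have : P.IsPrime := hP.1.1
    obtain ⟨s, hsP, hsf⟩ := (IsLocalization.algebraMap_mem_map_algebraMap_iff P.primeCompl
      (Localization.AtPrime P) (I ^ p) f).mp (by simpa [Ideal.map_pow] using hmult P hP)
    exact hsP (hle (Ideal.mem_colon_span_singleton.mpr hsf))
  obtain ⟨s, hsf, hs⟩ := Ideal.exists_mem_forall_notMem_of_finite
    (I.finite_minimalPrimes_of_isNoetherianRing O) (fun P hP => hP.1.1) hcolon
  have hI : I.IsRadical := (Ideal.isRadical_iff_quotient_reduced I).mpr hred
  exact (isQuasiRegular_of_isWeaklyRegular g hreg.toIsWeaklyRegular).mem_pow_of_mul_mem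
    (fun y => hI.mem_of_mul_mem hs) p (Ideal.mem_colon_span_singleton.mp hsf)

/-- Lemma 2.3 ("lemma.CM"): if `(Z,p) ⊂ (M,p)` is a reduced complete intersection
cut out by a regular sequence `g 1, …, g k` in the local ring `O` of `M` at `p`,
and the multiplicity of `f` along `Z` at the generic point of every component of
`Z` (i.e. at every minimal prime over `I = (g_1,…,g_k)`) is at least `p`, then
`f ∈ I ^ p`, i.e. `f` is a sum of terms `g_1^{m_1} ⋯ g_k^{m_k} · a` with
`∑ m_i = p`. -/
theorem stmt_1 {O : Type*} [CommRing O] [IsDomain O] [IsLocalRing O]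
    [IsNoetherianRing O] [IsIntegrallyClosed O]
    {k : ℕ} (g : Fin k → O)
    (hreg : RingTheory.Sequence.IsRegular O (List.ofFn g))
    (hred : IsReduced (O ⧸ (Ideal.span (Set.range g) : Ideal O)))
    (f : O) (p : ℕ)
    (hmult : ∀ (P : Ideal O) [P.IsPrime],
      P ∈ (Ideal.span (Set.range g) : Ideal O).minimalPrimes →
      (algebraMap O (Localization.AtPrime P)) f ∈
        (Ideal.span (Set.range g)).map (algebraMap O (Localization.AtPrime P)) ^ p) :
    f ∈ (Ideal.span (Set.range g) : Ideal O) ^ p :=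
  stmt_1_general g hreg hred f p hmult
end

section
/- For integers k > r ≥ 1 and positive integers p_1,…,p_r, the coefficient of t^{k−r} in the formal power series (1−t)^{k−1}/∏_{i=1}^r(1−p_i t) equals the coefficient of t^{k−r} in (1/k)·(1−t)^k·(Σ_{j=1}^r 1/(1−p_j t))/∏_{i=1}^r(1−p_i t). -/
open PowerSeries

/-- The geometric series `1/(1 - p t) = Σ pⁿ tⁿ` as a formal power series. -/
noncomputable def geom (p : ℕ) : PowerSeries ℚ :=
  PowerSeries.mk fun n => (p : ℚ) ^ n

/-!
Write `F = ∏ᵢ 1/(1 - pᵢt)`. Since `t·(1/(1 - pt))' = 1/(1 - pt)² - 1/(1 - pt)`, the logarithmic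
derivative of `F` gives `(Σⱼ 1/(1 - pⱼt))·F = r·F + t·F'`. With `G = (1 - t)^k·F`,
`(1 - t)^k·(r·F + t·F') = r·G + t·G' + k·t·(1 - t)^(k-1)·F`, and the coefficient of `tⁿ` in
`r·G + t·G'` is `(r + n)` times that of `G`. For `n = k - r` this factor is `k`, and
`G + t·(1 - t)^(k-1)·F = (1 - t)^(k-1)·F`.
-/

namespace PowerSeries

variable {R : Type*} [CommRing R]

theorem coeff_X_mul_derivative (f : R⟦X⟧) (n : ℕ) :
    coeff n (X * d⁄dX R f) = n * coeff n f := by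
  cases n with
  | zero => simp
  | succ n => rw [coeff_succ_X_mul, coeff_derivative, mul_comm]; push_cast; rfl

theorem coeff_one_sub_X_pow_mul_smul_add_X_mul_derivative (f : R⟦X⟧) {r n k : ℕ}
    (h : r + n = k + 1) :
    coeff n ((1 - X) ^ (k + 1) * (r • f + X * d⁄dX R f))
      = (k + 1 : R) * coeff n ((1 - X) ^ k * f) := by
  set A := (1 - X : R⟦X⟧) ^ k * f
  set G := (1 - X : R⟦X⟧) ^ (k + 1) * f
  have hG : G = A - X * A := by simp only [G, A, pow_succ]; ring
  have hdG : d⁄dX R G = (1 - X) ^ (k + 1) * d⁄dX R f - (k + 1) • A := by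
    simp only [G, A, Derivation.leibniz, derivative_pow, map_sub, derivative_one, derivative_X,
      smul_eq_mul, nsmul_eq_mul]
    push_cast
    ring
  have hexpand : (1 - X) ^ (k + 1) * (r • f + X * d⁄dX R f)
      = r • G + X * d⁄dX R G + (k + 1) • (X * A) := by
    rw [hdG]; simp only [G, nsmul_eq_mul]; ring
  have hcoeff : coeff n (r • G + X * d⁄dX R G) = (k + 1 : R) * coeff n G := by
    rw [map_add, map_nsmul, coeff_X_mul_derivative, nsmul_eq_mul, ← add_mul, ← Nat.cast_add, h,
      Nat.cast_succ]
  rw [hexpand, map_add, hcoeff, map_nsmul, nsmul_eq_mul, Nat.cast_succ, ← mul_add, ← map_add,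
    hG, sub_add_cancel]

theorem X_mul_derivative_prod {ι : Type*} (s : Finset ι) (f g : ι → R⟦X⟧)
    (h : ∀ i ∈ s, X * d⁄dX R (f i) = g i * f i) :
    X * d⁄dX R (∏ i ∈ s, f i) = (∑ i ∈ s, g i) * ∏ i ∈ s, f i := by
  classical
  induction s using Finset.induction with
  | empty => simp
  | insert a s ha ih =>
    have ih := ih fun i hi => h i (Finset.mem_insert_of_mem hi)
    have hfa := h a (Finset.mem_insert_self a s)
    rw [Finset.prod_insert ha, Finset.sum_insert ha, Derivation.leibniz, smul_eq_mul, smul_eq_mul]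
    linear_combination f a * ih + (∏ i ∈ s, f i) * hfa

end PowerSeries

theorem geom_sub_one (p : ℕ) : geom p - 1 = X * (C (p : ℚ) * geom p) := by
  ext n
  cases n with
  | zero => simp [geom]
  | succ n =>
    rw [map_sub, coeff_succ_X_mul, coeff_C_mul]
    simp [geom, pow_succ, mul_comm]

theorem derivative_geom (p : ℕ) : d⁄dX ℚ (geom p) = C (p : ℚ) * geom p ^ 2 := by
  ext n
  have hpow : ∀ x ∈ Finset.HasAntidiagonal.antidiagonal n,
      (p : ℚ) ^ x.1 * (p : ℚ) ^ x.2 = (p : ℚ) ^ n :=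
    fun x hx => by rw [← pow_add, Finset.HasAntidiagonal.mem_antidiagonal.mp hx]
  rw [coeff_derivative, coeff_C_mul, sq, coeff_mul]
  simp only [geom, coeff_mk]
  rw [Finset.sum_congr rfl hpow, Finset.sum_const, Finset.Nat.card_antidiagonal, nsmul_eq_mul]
  push_cast
  ring

theorem X_mul_derivative_geom (p : ℕ) : X * d⁄dX ℚ (geom p) = (geom p - 1) * geom p := by
  rw [derivative_geom, geom_sub_one]
  ring

theorem sum_geom_mul_prod_geom {ι : Type*} (s : Finset ι) (p : ι → ℕ) :
    (∑ j ∈ s, geom (p j)) * ∏ i ∈ s, geom (p i)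
      = s.card • ∏ i ∈ s, geom (p i) + X * d⁄dX ℚ (∏ i ∈ s, geom (p i)) := by
  rw [X_mul_derivative_prod s _ _ fun i _ => X_mul_derivative_geom (p i), Finset.sum_sub_distrib,
    Finset.sum_const, sub_mul, smul_mul_assoc, one_mul, add_sub_cancel]

theorem stmt_8_general (k r : ℕ) (hkr : r < k)
    (p : Fin r → ℕ) :
    coeff (R := ℚ) (k - r) ((1 - X) ^ (k - 1) * ∏ i, geom (p i))
      = coeff (R := ℚ) (k - r)
        ((k : ℚ)⁻¹ • ((1 - X) ^ k * (∑ j, geom (p j)) * ∏ i, geom (p i))) := by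
  obtain ⟨k, rfl⟩ := Nat.exists_eq_add_one_of_ne_zero (by omega : k ≠ 0)
  have hsum := sum_geom_mul_prod_geom Finset.univ p
  rw [Finset.card_univ, Fintype.card_fin] at hsum
  rw [Nat.add_sub_cancel, map_smul, mul_assoc, hsum,
    coeff_one_sub_X_pow_mul_smul_add_X_mul_derivative _ (by omega : r + (k + 1 - r) = k + 1),
    smul_eq_mul, ← mul_assoc]
  push_cast
  rw [inv_mul_cancel₀ (by positivity), one_mul]

/-- For `k > r ≥ 1` and positive integers `p₁,…,p_r`, the coefficient of
`t^{k−r}` in `(1−t)^{k−1} / ∏ᵢ (1−pᵢt)` equals the coefficient of `t^{k−r}` in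
`(1/k)·(1−t)^k · (Σⱼ 1/(1−pⱼt)) / ∏ᵢ (1−pᵢt)`. -/
theorem stmt_8 (k r : ℕ) (hr : 1 ≤ r) (hkr : r < k)
    (p : Fin r → ℕ) (hp : ∀ i, 0 < p i) :
    coeff (R := ℚ) (k - r) ((1 - X) ^ (k - 1) * ∏ i, geom (p i))
      = coeff (R := ℚ) (k - r)
        ((k : ℚ)⁻¹ • ((1 - X) ^ k * (∑ j, geom (p j)) * ∏ i, geom (p i))) :=
  stmt_8_general k r hkr p
end

section
/- For integers k > r ≥ 1 and integers p_1,…,p_r, the coefficient of x^{k−r} in the formal power series (1+x)^{k−1}/∏_{i=1}^r(1+p_i x) equals the sum over all tuples (k_1,…,k_r) of nonnegative integers with k_1+⋯+k_r = k−r of ∏_{i=1}^r (1−p_i)^{k_i}. -/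
/-!
For `g_b = Σ bⁿ xⁿ = 1/(1 - b x)` one has `g_b = 1 + b x g_b` and hence
`(1 + x) g_b = 1 + (1 + b) x g_b`. So, splitting off the first factor, both
`[x^N] (1+x)^(N+r-1) ∏ g_{b_i}` and `[x^N] ∏ g_{1+b_i}` satisfy
`c(N+1, r+1) = c(N+1, r) + (1 + b₀) c(N, r+1)`, with the same boundary values at `N = 0` and
`r = 0`. With `b_i = -p_i`, the coefficient of `∏ g_{1-p_i}` expands as the sum over
compositions of `N` into `r` parts.
-/

open PowerSeries

/-- The geometric series `1/(1 + p x) = Σ (−p)ⁿ xⁿ` as a formal power series. -/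
noncomputable def geomNeg (p : ℤ) : PowerSeries ℚ :=
  PowerSeries.mk fun n => (-(p : ℚ)) ^ n

namespace PowerSeries

variable {R : Type*} [CommSemiring R]

theorem coeff_prod_eq_sum_antidiagonalTuple {r : ℕ} (f : Fin r → R⟦X⟧) (n : ℕ) :
    coeff n (∏ i, f i) = ∑ m ∈ Finset.Nat.antidiagonalTuple r n, ∏ i, coeff (m i) (f i) := by
  classical
  rw [coeff_prod]
  exact Finset.sum_equiv Finsupp.equivFunOnFinite
    (by simp [Finset.Nat.mem_antidiagonalTuple]) (by simp)

theorem coeff_one_add_X_pow_of_lt {m n : ℕ} (h : n < m) : coeff m ((1 + X : R⟦X⟧) ^ n) = 0 := by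
  rw [← Polynomial.coe_X, ← Polynomial.coe_one, ← Polynomial.coe_add, ← Polynomial.coe_pow,
    Polynomial.coeff_coe, Polynomial.coeff_one_add_X_pow, Nat.choose_eq_zero_of_lt h, Nat.cast_zero]

theorem mk_pow_eq_one_add_C_mul_X_mul (a : R) :
    (mk fun n => a ^ n) = 1 + C a * X * mk fun n => a ^ n := by
  ext (_ | n)
  · simp
  · rw [map_add, mul_comm (C a), mul_assoc, coeff_succ_X_mul, coeff_C_mul]
    simp [pow_succ']

theorem one_add_X_mul_mk_pow (b : R) :
    (1 + X) * (mk fun n => b ^ n) = 1 + C (1 + b) * X * mk fun n => b ^ n := by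
  set G : R⟦X⟧ := mk fun n => b ^ n
  calc (1 + X) * G = (1 + C b * X * G) + X * G := by
        rw [← mk_pow_eq_one_add_C_mul_X_mul b]; ring
    _ = 1 + C (1 + b) * X * G := by rw [map_add, map_one]; ring

theorem coeff_one_add_X_pow_mul_prod_mk_pow {r : ℕ} (b : Fin r → R) (N : ℕ) :
    coeff N ((1 + X) ^ (N + r - 1) * ∏ i, mk fun n => b i ^ n)
      = coeff N (∏ i, mk fun n => (1 + b i) ^ n) := by
  induction r generalizing N with
  | zero =>
    cases N with
    | zero => simp
    | succ N => simp [coeff_one_add_X_pow_of_lt, coeff_one]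
  | succ r ih =>
    induction N with
    | zero => simp
    | succ N ihN =>
      have hH := ih (fun i => b i.succ) (N + 1)
      simp only [Fin.prod_univ_succ] at ihN ⊢
      set G : R⟦X⟧ := mk fun n => b 0 ^ n
      set H : R⟦X⟧ := ∏ i : Fin r, mk fun n => b i.succ ^ n
      set G' : R⟦X⟧ := mk fun n => (1 + b 0) ^ n
      set H' : R⟦X⟧ := ∏ i : Fin r, mk fun n => (1 + b i.succ) ^ n
      have hLHS : (1 + X) ^ (N + 1 + (r + 1) - 1) * (G * H)
          = (1 + X) ^ (N + 1 + r - 1) * H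
            + C (1 + b 0) * X * ((1 + X) ^ (N + (r + 1) - 1) * (G * H)) := by
        rw [show N + 1 + (r + 1) - 1 = N + r + 1 by omega, show N + 1 + r - 1 = N + r by omega,
          show N + (r + 1) - 1 = N + r by omega, pow_succ, mul_assoc, ← mul_assoc (1 + X),
          one_add_X_mul_mk_pow]
        ring
      have hRHS : G' * H' = H' + C (1 + b 0) * X * (G' * H') := by
        have hG' : G' = 1 + C (1 + b 0) * X * G' := mk_pow_eq_one_add_C_mul_X_mul _
        conv_lhs => rw [hG']
        ring
      rw [hLHS, hRHS, map_add (coeff (N + 1)), map_add (coeff (N + 1)), mul_assoc, coeff_C_mul,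
        coeff_succ_X_mul, hH, ihN, mul_assoc, coeff_C_mul, coeff_succ_X_mul]

end PowerSeries

theorem stmt_9_general (k r : ℕ) (hkr : r < k) (p : Fin r → ℤ) :
    coeff (R := ℚ) (k - r) ((1 + X) ^ (k - 1) * ∏ i, geomNeg (p i))
      = ∑ m ∈ Finset.Nat.antidiagonalTuple r (k - r),
          ∏ i, ((1 : ℚ) - (p i : ℚ)) ^ m i := by
  have key := coeff_one_add_X_pow_mul_prod_mk_pow (fun i => -(p i : ℚ)) (k - r)
  rw [show k - r + r - 1 = k - 1 by omega, coeff_prod_eq_sum_antidiagonalTuple] at key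
  simpa only [geomNeg, coeff_mk, sub_eq_add_neg] using key

/-- For integers `k > r ≥ 1` and integers `p₁,…,p_r`, the coefficient of
`x^{k−r}` in `(1+x)^{k−1} / ∏ᵢ (1+pᵢx)` equals
`Σ_{k₁+⋯+k_r = k−r, kᵢ ≥ 0} ∏ᵢ (1−pᵢ)^{kᵢ}`. -/
theorem stmt_9 (k r : ℕ) (hr : 1 ≤ r) (hkr : r < k) (p : Fin r → ℤ) :
    coeff (R := ℚ) (k - r) ((1 + X) ^ (k - 1) * ∏ i, geomNeg (p i))
      = ∑ m ∈ Finset.Nat.antidiagonalTuple r (k - r),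
          ∏ i, ((1 : ℚ) - (p i : ℚ)) ^ m i :=
  stmt_9_general k r hkr p
end
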